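/- arXiv:math/0505441 — 5 statements merged into one kernel-verified Lean document; each statement's English description precedes it below -/
import Mathlib

section
/- If integers u, y, z satisfy 8z² = u² + 15y², then 5 divides u, 5 divides z, and 5 divides y. -/
/-- Descent step: if integers `u, y, z` satisfy `8z² = u² + 15y²`, then `5 ∣ u`,
`5 ∣ z` and `5 ∣ y`. -/
theorem five_dvd_of_eight_sq_eq (u y z : ℤ) (h : 8 * z ^ 2 = u ^ 2 + 15 * y ^ 2) :
    5 ∣ u ∧ 5 ∣ z ∧ 5 ∣ y := by
  have hu : (5:ℤ) ∣ u ∧ (5:ℤ) ∣ z := by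
    have h5 : ((8 * z ^ 2 : ℤ) : ZMod 5) = ((u ^ 2 + 15 * y ^ 2 : ℤ) : ZMod 5) := by
      exact_mod_cast congrArg (Int.cast : ℤ → ZMod 5) h
    push_cast at h5
    constructor
    · rw [show ((5:ℤ) ∣ u) ↔ ((u : ZMod 5) = 0) from (ZMod.intCast_zmod_eq_zero_iff_dvd u 5).symm]
      revert h5; generalize (u : ZMod 5) = a; generalize (z : ZMod 5) = b
        ; generalize (y : ZMod 5) = c
      revert a b c; decide
    · rw [show ((5:ℤ) ∣ z) ↔ ((z : ZMod 5) = 0) from (ZMod.intCast_zmod_eq_zero_iff_dvd z 5).symm]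
      revert h5; generalize (u : ZMod 5) = a; generalize (z : ZMod 5) = b
        ; generalize (y : ZMod 5) = c
      revert a b c; decide
  obtain ⟨h1, h2⟩ := hu
  refine ⟨h1, h2, ?_⟩
  obtain ⟨a, rfl⟩ := h1
  obtain ⟨b, rfl⟩ := h2
  have h3 : (5:ℤ) ∣ 3 * y ^ 2 := ⟨8 * b ^ 2 - a ^ 2, by linarith⟩
  have h5p : Prime (5:ℤ) := by norm_num
  have := (h5p.dvd_mul.mp h3).resolve_left (by norm_num)
  rcases h5p.dvd_mul.mp (by simpa [sq] using this) with h | h <;> exact h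
end

section
/- The only integers x, y, z satisfying 2z² = 10x² + 8xy + 10y² are x = y = z = 0. Equivalently, the rank-3 lattice ℤ³ equipped with the symmetric bilinear form whose Gram matrix is [[-10,-4,0],[-4,-10,0],[0,0,2]] contains no nonzero isotropic vector (no nonzero v ∈ ℤ³ with vᵀGv = 0). -/
open Matrix

private lemma mod3 (a b : ℤ) (h : (2 * (a : ZMod 3) ^ 2 = b ^ 2)) :
    (3 : ℤ) ∣ a ∧ (3 : ℤ) ∣ b := by
  have h1 : (a : ZMod 3) = 0 ∧ (b : ZMod 3) = 0 := by
    revert h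
    generalize (a : ZMod 3) = A
    generalize (b : ZMod 3) = B
    revert A B
    decide
  refine ⟨?_, ?_⟩
  · exact_mod_cast (ZMod.intCast_zmod_eq_zero_iff_dvd a 3).mp h1.1
  · exact_mod_cast (ZMod.intCast_zmod_eq_zero_iff_dvd b 3).mp h1.2

private lemma descent : ∀ n : ℕ, ∀ z u y : ℤ, z.natAbs = n →
    5 * z ^ 2 = u ^ 2 + 21 * y ^ 2 → z = 0 ∧ u = 0 ∧ y = 0 := by
  intro n
  induction n using Nat.strong_induction_on with
  | _ n ih =>
    intro z u y hn h
    rcases eq_or_ne z 0 with hz | hz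
    · subst hz
      have hu : u = 0 := by nlinarith [sq_nonneg u, sq_nonneg y]
      have hy : y = 0 := by nlinarith [sq_nonneg u, sq_nonneg y]
      exact ⟨rfl, hu, hy⟩
    · exfalso
      have hcast : (2 : ZMod 3) * (z : ZMod 3) ^ 2 = (u : ZMod 3) ^ 2 := by
        have : ((5 * z ^ 2 : ℤ) : ZMod 3) = ((u ^ 2 + 21 * y ^ 2 : ℤ) : ZMod 3) := by
          exact_mod_cast congrArg _ h
        push_cast at this
        have h3 : (3 : ZMod 3) = 0 := by decide
        linear_combination this + (7 * (y : ZMod 3) ^ 2 - (z : ZMod 3) ^ 2) * h3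
      obtain ⟨⟨z', hz'⟩, ⟨u', hu'⟩⟩ := mod3 z u hcast
      subst hz' hu'
      have h2 : 15 * z' ^ 2 = 3 * u' ^ 2 + 7 * y ^ 2 := by linarith
      have hy3 : (3 : ℤ) ∣ y := by
        have : (3 : ℤ) ∣ 7 * y ^ 2 := ⟨5 * z' ^ 2 - u' ^ 2, by linarith⟩
        have h7 : (3 : ℤ) ∣ y ^ 2 := by omega
        exact Int.Prime.dvd_pow' (by norm_num) h7
      obtain ⟨y', hy'⟩ := hy3
      subst hy'
      have h3 : 5 * z' ^ 2 = u' ^ 2 + 21 * y' ^ 2 := by linarith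
      have hlt : z'.natAbs < n := by
        have : z' ≠ 0 := by rintro rfl; simp at hz
        omega
      have := ih z'.natAbs hlt z' u' y' rfl h3
      exact hz (by omega)

private lemma key (x y z : ℤ) (h : 2 * z ^ 2 = 10 * x ^ 2 + 8 * x * y + 10 * y ^ 2) :
    x = 0 ∧ y = 0 ∧ z = 0 := by
  have h5 : 5 * z ^ 2 = (5 * x + 2 * y) ^ 2 + 21 * y ^ 2 := by ring_nf; linarith
  obtain ⟨hz, hu, hy⟩ := descent z.natAbs z (5 * x + 2 * y) y rfl h5
  exact ⟨by omega, hy, hz⟩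

/-- The only integers `x, y, z` with `2z² = 10x² + 8xy + 10y²` are `x = y = z = 0`;
equivalently, the rank-3 lattice `ℤ³` with Gram matrix
`[[-10,-4,0],[-4,-10,0],[0,0,2]]` has no nonzero isotropic vector. -/
theorem no_elliptic_curve_OxT :
    (∀ x y z : ℤ, 2 * z ^ 2 = 10 * x ^ 2 + 8 * x * y + 10 * y ^ 2 →
      x = 0 ∧ y = 0 ∧ z = 0) ∧
    (∀ v : Fin 3 → ℤ,
      v ⬝ᵥ (!![(-10 : ℤ), -4, 0; -4, -10, 0; 0, 0, 2]).mulVec v = 0 → v = 0) := by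
  refine ⟨key, ?_⟩
  intro v hv
  simp [dotProduct, Matrix.mulVec, Fin.sum_univ_three] at hv
  have h : 2 * (v 2) ^ 2 = 10 * (v 0) ^ 2 + 8 * (v 0) * (v 1) + 10 * (v 1) ^ 2 := by
    ring_nf; ring_nf at hv; linarith
  obtain ⟨h0, h1, h2⟩ := key (v 0) (v 1) (v 2) h
  funext i
  fin_cases i <;> simpa
end

section
/- If integers u, y, z satisfy 5z² = u² + 21y², then 7 divides u, 7 divides z, and 7 divides y. -/
/-- Descent step: if integers `u, y, z` satisfy `5z² = u² + 21y²`, then `7 ∣ u`,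
`7 ∣ z` and `7 ∣ y`. -/
theorem seven_dvd_of_five_sq_eq (u y z : ℤ) (h : 5 * z ^ 2 = u ^ 2 + 21 * y ^ 2) :
    7 ∣ u ∧ 7 ∣ z ∧ 7 ∣ y := by
  have key : ∀ a c : ZMod 7, 5 * c ^ 2 = a ^ 2 → a = 0 ∧ c = 0 := by decide
  have h' : 5 * (z : ZMod 7) ^ 2 = (u : ZMod 7) ^ 2 := by
    have := congrArg (fun n : ℤ => (n : ZMod 7)) h
    push_cast at this
    simp only [show ((21 : ZMod 7)) = 0 by decide] at this ⊢
    linear_combination this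
  obtain ⟨h1, h2⟩ := key _ _ h'
  have hu : (7:ℤ) ∣ u := (ZMod.intCast_zmod_eq_zero_iff_dvd u 7).mp h1
  have hz : (7:ℤ) ∣ z := (ZMod.intCast_zmod_eq_zero_iff_dvd z 7).mp h2
  obtain ⟨a, rfl⟩ := hu
  obtain ⟨b, rfl⟩ := hz
  have h3 : (7:ℤ) ∣ 3 * y ^ 2 := ⟨5 * b ^ 2 - a ^ 2, by ring_nf; linarith⟩
  have hp : Prime (7:ℤ) := by norm_num
  have hy : (7:ℤ) ∣ y := by
    rcases hp.dvd_mul.mp h3 with h4 | h4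
    · omega
    · exact hp.dvd_of_dvd_pow h4
  exact ⟨⟨a, rfl⟩, ⟨b, rfl⟩, hy⟩
end

section
/- Let L be an even unimodular lattice (a free ℤ-module of finite rank with nondegenerate symmetric ℤ-valued bilinear form b such that b(x,x) ∈ 2ℤ for all x and |d(L)| = 1), let M ⊆ L be a primitive nondegenerate sublattice (L/M is torsion-free), and let N = M^⊥ = {x ∈ L : b(x, m) = 0 for all m ∈ M}. Then there is a group isomorphism φ : M∨/M → N∨/N between the discriminant groups which anti-preserves the discriminant quadratic forms: q_N(φ(ξ)) = −q_M(ξ) in ℚ/2ℤ for every ξ ∈ M∨/M. -/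
open Matrix

/-- The natural `ℤ`-linear embedding of `ℤⁿ` into `ℚⁿ`. -/
def castLM (n : ℕ) : (Fin n → ℤ) →ₗ[ℤ] (Fin n → ℚ) where
  toFun x := fun i => (x i : ℚ)
  map_add' x y := by funext i; simp
  map_smul' c x := by funext i; simp [zsmul_eq_mul]

/-- The `ℚ`-span of a sublattice `M ⊆ ℤⁿ` inside `ℚⁿ`, viewed as a `ℤ`-module;
it realizes `M ⊗ ℚ`. -/
def ratSpan {n : ℕ} (M : Submodule ℤ (Fin n → ℤ)) : Submodule ℤ (Fin n → ℚ) :=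
  (Submodule.span ℚ ((castLM n) '' (M : Set (Fin n → ℤ)))).restrictScalars ℤ

/-- The `ℤ`-module of rational vectors pairing integrally with every element of
`M` under the bilinear form with Gram matrix `G`. -/
def integralPairing {n : ℕ} (G : Matrix (Fin n) (Fin n) ℚ)
    (M : Submodule ℤ (Fin n → ℤ)) : Submodule ℤ (Fin n → ℚ) where
  carrier := {v | ∀ x ∈ M, ∃ k : ℤ, v ⬝ᵥ G.mulVec (castLM n x) = (k : ℚ)}
  zero_mem' := fun x _ => ⟨0, by simp⟩
  add_mem' := by
    intro v w hv hw x hx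
    obtain ⟨k, hk⟩ := hv x hx
    obtain ⟨l, hl⟩ := hw x hx
    exact ⟨k + l, by rw [add_dotProduct, hk, hl]; push_cast; ring⟩
  smul_mem' := by
    intro c v hv x hx
    obtain ⟨k, hk⟩ := hv x hx
    exact ⟨c * k, by rw [smul_dotProduct, hk, zsmul_eq_mul]; push_cast; ring⟩

/-- The dual lattice `M∨ = {v ∈ M ⊗ ℚ : b(v,x) ∈ ℤ for all x ∈ M}` of a sublattice
`M ⊆ ℤⁿ`, realized inside `ℚⁿ`. -/
def dualIn {n : ℕ} (G : Matrix (Fin n) (Fin n) ℚ)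
    (M : Submodule ℤ (Fin n → ℤ)) : Submodule ℤ (Fin n → ℚ) :=
  ratSpan M ⊓ integralPairing G M

/-- The discriminant group `M∨/M` of a sublattice `M ⊆ ℤⁿ`. -/
abbrev discGroup {n : ℕ} (G : Matrix (Fin n) (Fin n) ℚ)
    (M : Submodule ℤ (Fin n → ℤ)) :=
  (↥(dualIn G M)) ⧸
    (Submodule.comap (dualIn G M).subtype (Submodule.map (castLM n) M))

/-!
Because `L` is unimodular and `M` is primitive (hence a direct summand of `L`), the pairing of a
vector `v ∈ M∨` with `M` is the pairing with some `x ∈ L`. Then `w = x - v` is orthogonal to `M`,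
so it lies in `N ⊗ ℚ`, and it pairs integrally with `N`: `w ∈ N∨`. Thus the relation `v + w ∈ L`
between `M∨` and `N∨` is total; it is also surjective by the same argument for `N`, which applies
because `(N ⊗ ℚ)^⊥ = M ⊗ ℚ` for the nondegenerate form on `ℚⁿ`. Primitivity of `M` and `N` shows
that the relation matches `M` with `N`, so it is the graph of an isomorphism `M∨/M ≃ N∨/N`.
Finally `v ⊥ w` gives `b(v, v) + b(w, w) = b(v + w, v + w) ∈ 2ℤ`.
-/

open Matrix

namespace Submodule

theorem exists_quotientEquiv_of_rel {S A B : Type*} [Ring S] [AddCommGroup A]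
    [Module S A] [AddCommGroup B] [Module S B] {A' : Submodule S A} {B' : Submodule S B}
    (R : Submodule S (A × B)) (hA : ∀ a, ∃ b, (a, b) ∈ R) (hB : ∀ b, ∃ a, (a, b) ∈ R)
    (hR : ∀ a b, (a, b) ∈ R → (a ∈ A' ↔ b ∈ B')) (hB' : ∀ b ∈ B', ((0 : A), b) ∈ R) :
    ∃ e : (A ⧸ A') ≃ₗ[S] (B ⧸ B'),
      ∀ a b, e (Quotient.mk a) = Quotient.mk b ↔ (a, b) ∈ R := by
  let f : R →ₗ[S] A ⧸ A' := A'.mkQ ∘ₗ LinearMap.fst S A B ∘ₗ R.subtype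
  let g : R →ₗ[S] B ⧸ B' := B'.mkQ ∘ₗ LinearMap.snd S A B ∘ₗ R.subtype
  have hf : Function.Surjective f := by
    rintro ⟨a⟩
    obtain ⟨b, hb⟩ := hA a
    exact ⟨⟨(a, b), hb⟩, rfl⟩
  have hg : Function.Surjective g := by
    rintro ⟨b⟩
    obtain ⟨a, ha⟩ := hB b
    exact ⟨⟨(a, b), ha⟩, rfl⟩
  have hker : LinearMap.ker f = LinearMap.ker g := by
    ext ⟨⟨a, b⟩, h⟩
    simpa [f, g] using hR a b h
  let e := (f.quotKerEquivOfSurjective hf).symm ≪≫ₗ quotEquivOfEq _ _ hker ≪≫ₗ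
    g.quotKerEquivOfSurjective hg
  have he : ∀ r : R, e (f r) = g r := fun r => by
    simp [e, LinearMap.quotKerEquivOfSurjective_apply_mk]
  refine ⟨e, fun a b => ⟨fun hab => ?_, fun h => he ⟨(a, b), h⟩⟩⟩
  obtain ⟨b₀, hb₀⟩ := hA a
  have hb : b - b₀ ∈ B' := (Quotient.eq B').1 (hab.symm.trans (he ⟨(a, b₀), hb₀⟩))
  simpa using add_mem hb₀ (hB' _ hb)

theorem exists_retraction_of_isTorsionFree_quotient {R L : Type*} [CommRing R]
    [IsDomain R] [IsPrincipalIdealRing R] [AddCommGroup L] [Module R L] [Module.Finite R L]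
    (P : Submodule R L) [Module.IsTorsionFree R (L ⧸ P)] :
    ∃ π : L →ₗ[R] P, ∀ x : P, π x = x := by
  obtain ⟨s, hs⟩ := P.mkQ.exists_rightInverse_of_surjective P.range_mkQ
  let p : L →ₗ[R] L := LinearMap.id - s ∘ₗ P.mkQ
  have hmem : ∀ x, p x ∈ P := fun x => by
    have h := LinearMap.congr_fun hs (P.mkQ x)
    rw [LinearMap.comp_apply, LinearMap.id_apply] at h
    rw [← P.ker_mkQ, LinearMap.mem_ker]
    simp only [p, LinearMap.sub_apply, LinearMap.id_apply, LinearMap.comp_apply, map_sub, h,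
      sub_self]
  exact ⟨p.codRestrict P hmem, fun x => by ext; simp [p, (Quotient.mk_eq_zero P).2 x.2]⟩

variable {L : Type*} [AddCommGroup L]

def IsPrimitive (P : Submodule ℤ L) : Prop :=
  ∀ (c : ℤ) (x : L), c ≠ 0 → c • x ∈ P → x ∈ P

theorem IsPrimitive.isTorsionFree_quotient {P : Submodule ℤ L} (hP : P.IsPrimitive) :
    Module.IsTorsionFree ℤ (L ⧸ P) := by
  refine Module.isTorsionFree_iff_smul_eq_zero.2 fun c q hcq => or_iff_not_imp_left.2 fun hc => ?_
  obtain ⟨x, rfl⟩ := P.mkQ_surjective q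
  rw [← map_smul, mkQ_apply, Quotient.mk_eq_zero] at hcq
  rw [mkQ_apply, Quotient.mk_eq_zero]
  exact hP c x hc hcq

theorem IsPrimitive.exists_dotProduct_eq {ι : Type*} [Fintype ι] [DecidableEq ι]
    {P : Submodule ℤ (ι → ℤ)} (hP : P.IsPrimitive) (f : (ι → ℤ) →ₗ[ℤ] ℚ)
    (hf : ∀ m ∈ P, ∃ k : ℤ, f m = k) : ∃ k : ι → ℤ, ∀ m ∈ P, f m = ((k ⬝ᵥ m : ℤ) : ℚ) := by
  have := hP.isTorsionFree_quotient
  obtain ⟨π, hπ⟩ := P.exists_retraction_of_isTorsionFree_quotient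
  choose k hk using fun i => hf _ (π fun j => if i = j then 1 else 0).2
  refine ⟨k, fun m hm => ?_⟩
  calc f m = (f ∘ₗ P.subtype ∘ₗ π) m := by simp [hπ ⟨m, hm⟩]
    _ = ∑ i, m i • (k i : ℚ) := by simp only [LinearMap.pi_apply_eq_sum_univ _ m,
        LinearMap.comp_apply, subtype_apply, hk]
    _ = ((k ⬝ᵥ m : ℤ) : ℚ) := by simp [dotProduct, mul_comm]

end Submodule

theorem Matrix.exists_dotProduct_mulVec_eq {ι R : Type*} [Fintype ι] [DecidableEq ι] [CommRing R]
    {G : Matrix ι ι R} (hG : IsUnit G.det) (k : ι → R) : ∃ x : ι → R, ∀ m, x ⬝ᵥ G *ᵥ m = k ⬝ᵥ m :=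
  ⟨k ᵥ* G⁻¹, fun m => by rw [dotProduct_mulVec, vecMul_vecMul, nonsing_inv_mul G hG, vecMul_one]⟩

namespace PrimitiveEmbedding

variable {n : ℕ}

@[simp]
theorem castLM_apply (x : Fin n → ℤ) (i : Fin n) : castLM n x i = x i := rfl

theorem castLM_injective : Function.Injective (castLM n) :=
  fun _ _ h => funext fun i => by simpa using congrFun h i

theorem exists_int_smul_eq_castLM (u : Fin n → ℚ) :
    ∃ d : ℤ, d ≠ 0 ∧ ∃ x, (d : ℚ) • u = castLM n x := by
  let d : ℤ := ∏ i, ((u i).den : ℤ)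
  have hd : ∀ i, ∃ k : ℤ, (d : ℚ) * u i = k := fun i => by
    obtain ⟨c, hc⟩ := Finset.dvd_prod_of_mem (fun i => ((u i).den : ℤ)) (Finset.mem_univ i)
    refine ⟨c * (u i).num, ?_⟩
    rw [show d = _ from hc]
    push_cast
    rw [mul_right_comm, Rat.den_mul_eq_num, mul_comm]
  choose x hx using hd
  exact ⟨d, Finset.prod_ne_zero_iff.2 fun i _ => by exact_mod_cast (u i).den_nz, x,
    funext fun i => by simp [hx]⟩

/-- `qSpan P` is `P ⊗ ℚ` as a `ℚ`-subspace of `ℚⁿ`; `ratSpan P` is its restriction of scalars. -/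
def qSpan (P : Submodule ℤ (Fin n → ℤ)) : Submodule ℚ (Fin n → ℚ) :=
  Submodule.span ℚ (castLM n '' P)

theorem mem_qSpan_iff {P : Submodule ℤ (Fin n → ℤ)} {v : Fin n → ℚ} :
    v ∈ qSpan P ↔ ∃ d : ℤ, d ≠ 0 ∧ ∃ m ∈ P, (d : ℚ) • v = castLM n m := by
  refine ⟨fun hv => ?_, fun ⟨d, hd, m, hm, hdm⟩ => ?_⟩
  · induction hv using Submodule.span_induction with
    | mem x hx =>
      obtain ⟨m, hm, rfl⟩ := hx
      exact ⟨1, one_ne_zero, m, hm, by simp⟩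
    | zero => exact ⟨1, one_ne_zero, 0, P.zero_mem, by simp⟩
    | add x y _ _ hx hy =>
      obtain ⟨d, hd, m, hm, hdm⟩ := hx
      obtain ⟨e, he, l, hl, hel⟩ := hy
      refine ⟨d * e, mul_ne_zero hd he, e • m + d • l,
        add_mem (P.smul_mem e hm) (P.smul_mem d hl), funext fun i => ?_⟩
      have hi := congrFun hdm i
      have hi' := congrFun hel i
      simp only [Pi.smul_apply, smul_eq_mul, castLM_apply] at hi hi'
      simp only [Pi.smul_apply, Pi.add_apply, smul_eq_mul, castLM_apply]
      push_cast
      linear_combination (e : ℚ) * hi + (d : ℚ) * hi'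
    | smul q x _ hx =>
      obtain ⟨d, hd, m, hm, hdm⟩ := hx
      refine ⟨q.den * d, mul_ne_zero (by exact_mod_cast q.den_nz) hd, q.num • m,
        P.smul_mem _ hm, funext fun i => ?_⟩
      have hi := congrFun hdm i
      simp only [Pi.smul_apply, smul_eq_mul, castLM_apply] at hi
      simp only [Pi.smul_apply, smul_eq_mul, castLM_apply]
      push_cast
      rw [← Rat.den_mul_eq_num q]
      linear_combination ((q.den : ℚ) * q) * hi
  · have hv : v = (d : ℚ)⁻¹ • castLM n m := by
      rw [← hdm, inv_smul_smul₀ (by exact_mod_cast hd)]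
    exact hv ▸ Submodule.smul_mem _ _ (Submodule.subset_span ⟨m, hm, rfl⟩)

theorem _root_.Submodule.IsPrimitive.mem_of_castLM_mem_qSpan {P : Submodule ℤ (Fin n → ℤ)}
    (hP : P.IsPrimitive) {z : Fin n → ℤ} (hz : castLM n z ∈ qSpan P) : z ∈ P := by
  obtain ⟨d, hd, m, hm, hdm⟩ := mem_qSpan_iff.1 hz
  have hdz : d • z = m := castLM_injective (by rw [map_zsmul, ← hdm, Int.cast_smul_eq_zsmul])
  exact hP d z hd (hdz ▸ hm)

theorem _root_.Submodule.IsPrimitive.mem_map_castLM_of_add_mem_range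
    {Q : Submodule ℤ (Fin n → ℤ)} (hQ : Q.IsPrimitive) {v w : Fin n → ℚ}
    (hv : v ∈ LinearMap.range (castLM n)) (hw : w ∈ qSpan Q)
    (hvw : v + w ∈ LinearMap.range (castLM n)) : w ∈ Q.map (castLM n) := by
  obtain ⟨x, rfl⟩ := hv
  obtain ⟨y, hy⟩ := hvw
  have hyx : castLM n (y - x) = w := by rw [map_sub, hy, add_sub_cancel_left]
  exact ⟨y - x, hQ.mem_of_castLM_mem_qSpan (hyx ▸ hw), hyx⟩

theorem mem_orthogonal_qSpan_iff {B : LinearMap.BilinForm ℚ (Fin n → ℚ)}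
    {P : Submodule ℤ (Fin n → ℤ)} {u : Fin n → ℚ} :
    u ∈ B.orthogonal (qSpan P) ↔ ∀ m ∈ P, B (castLM n m) u = 0 := by
  refine ⟨fun h m hm => h _ (Submodule.subset_span ⟨m, hm, rfl⟩), fun h w hw => ?_⟩
  refine (Submodule.span_le (p := LinearMap.ker (B.flip u))).2 ?_ hw
  rintro _ ⟨m, hm, rfl⟩
  exact h m hm

variable {G : Matrix (Fin n) (Fin n) ℤ}

def ratForm (G : Matrix (Fin n) (Fin n) ℤ) : LinearMap.BilinForm ℚ (Fin n → ℚ) :=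
  (G.map (Int.cast : ℤ → ℚ)).toBilin'

theorem ratForm_apply (v w : Fin n → ℚ) : ratForm G v w = v ⬝ᵥ G.map Int.cast *ᵥ w :=
  toBilin'_apply' _ v w

theorem ratForm_castLM (x y : Fin n → ℤ) :
    ratForm G (castLM n x) (castLM n y) = ((x ⬝ᵥ G *ᵥ y : ℤ) : ℚ) := by
  simp [ratForm_apply, dotProduct, mulVec]

theorem ratForm_isSymm (hG : G.IsSymm) : (ratForm G).IsSymm :=
  LinearMap.BilinForm.isSymm_def.2 fun v w => by
    rw [ratForm_apply, ratForm_apply, dotProduct_mulVec, dotProduct_comm, ← mulVec_transpose,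
      (hG.map _).eq]

theorem ratForm_nondegenerate (hG : IsUnit G.det) : (ratForm G).Nondegenerate := by
  refine LinearMap.BilinForm.nondegenerate_toBilin'_of_det_ne_zero' _ ?_
  rw [← Int.cast_det]
  exact_mod_cast hG.ne_zero

theorem exists_ratForm_castLM_eq (hG : IsUnit G.det) {P : Submodule ℤ (Fin n → ℤ)}
    (hP : P.IsPrimitive) {v : Fin n → ℚ} (hv : v ∈ integralPairing (G.map Int.cast) P) :
    ∃ x, ∀ m ∈ P, ratForm G (castLM n x) (castLM n m) = ratForm G v (castLM n m) := by
  obtain ⟨k, hk⟩ := hP.exists_dotProduct_eq ((ratForm G v).restrictScalars ℤ ∘ₗ castLM n)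
    fun m hm => by simpa [ratForm_apply] using hv m hm
  obtain ⟨x, hx⟩ := exists_dotProduct_mulVec_eq hG k
  exact ⟨x, fun m hm => by rw [ratForm_castLM, hx, ← hk m hm]; rfl⟩

theorem qSpan_eq_orthogonal (hG : G.IsSymm) {M N : Submodule ℤ (Fin n → ℤ)}
    (hN : ∀ x, x ∈ N ↔ ∀ m ∈ M, x ⬝ᵥ G *ᵥ m = 0) :
    qSpan N = (ratForm G).orthogonal (qSpan M) := by
  have hsymm := ratForm_isSymm hG
  refine le_antisymm (Submodule.span_le.2 ?_) fun u hu => ?_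
  · rintro _ ⟨y, hy, rfl⟩
    refine mem_orthogonal_qSpan_iff.2 fun m hm => ?_
    rw [hsymm.eq, ratForm_castLM, (hN y).1 hy m hm, Int.cast_zero]
  · obtain ⟨d, hd, x, hx⟩ := exists_int_smul_eq_castLM u
    refine mem_qSpan_iff.2 ⟨d, hd, x, (hN x).2 fun m hm => ?_, hx⟩
    have h : ratForm G (castLM n x) (castLM n m) = 0 := by
      rw [← hx, hsymm.eq, map_smul, mem_orthogonal_qSpan_iff.1 hu m hm, smul_zero]
    exact_mod_cast (ratForm_castLM x m).symm.trans h

theorem isPrimitive_of_mem_iff {M N : Submodule ℤ (Fin n → ℤ)}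
    (hN : ∀ x, x ∈ N ↔ ∀ m ∈ M, x ⬝ᵥ G *ᵥ m = 0) : N.IsPrimitive := fun c x hc hcx => by
  refine (hN x).2 fun m hm => ?_
  have h := (hN _).1 hcx m hm
  rw [smul_dotProduct, smul_eq_mul] at h
  exact (mul_eq_zero.1 h).resolve_left hc

theorem exists_add_mem_range_castLM (hG : G.IsSymm) (hdet : IsUnit G.det)
    {P Q : Submodule ℤ (Fin n → ℤ)} (hP : P.IsPrimitive)
    (hPQ : qSpan Q = (ratForm G).orthogonal (qSpan P)) (v : dualIn (G.map Int.cast) P) :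
    ∃ w : dualIn (G.map Int.cast) Q, (v : Fin n → ℚ) + w ∈ LinearMap.range (castLM n) := by
  obtain ⟨x, hx⟩ := exists_ratForm_castLM_eq hdet hP v.2.2
  have hvQ : ∀ y ∈ Q, ratForm G v (castLM n y) = 0 := fun y hy => by
    have hy' : castLM n y ∈ qSpan Q := Submodule.subset_span ⟨y, hy, rfl⟩
    rw [hPQ] at hy'
    exact hy' _ v.2.1
  refine ⟨⟨castLM n x - v, ?_, fun y hy => ⟨x ⬝ᵥ G *ᵥ y, ?_⟩⟩, x, (add_sub_cancel _ _).symm⟩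
  · change _ ∈ qSpan Q
    rw [hPQ, mem_orthogonal_qSpan_iff]
    intro m hm
    rw [(ratForm_isSymm hG).eq, map_sub, LinearMap.sub_apply, hx m hm, sub_self]
  · rw [← ratForm_apply, map_sub, LinearMap.sub_apply, ratForm_castLM, hvQ y hy, sub_zero]

theorem exists_ratForm_add_eq_two_mul (hG : G.IsSymm)
    (heven : ∀ x : Fin n → ℤ, ∃ k : ℤ, x ⬝ᵥ G *ᵥ x = 2 * k) {v w : Fin n → ℚ}
    (hvw : ratForm G v w = 0) (h : v + w ∈ LinearMap.range (castLM n)) :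
    ∃ k : ℤ, ratForm G w w + ratForm G v v = 2 * k := by
  obtain ⟨x, hx⟩ := h
  obtain ⟨k, hk⟩ := heven x
  have hwv : ratForm G w v = 0 := by rw [(ratForm_isSymm hG).eq, hvw]
  refine ⟨k, ?_⟩
  calc ratForm G w w + ratForm G v v = ratForm G (v + w) (v + w) := by simp [hvw, hwv, add_comm]
    _ = 2 * k := by rw [← hx, ratForm_castLM, hk]; push_cast; ring

def glue (Gq : Matrix (Fin n) (Fin n) ℚ) (M N : Submodule ℤ (Fin n → ℤ)) :
    Submodule ℤ (dualIn Gq M × dualIn Gq N) :=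
  (LinearMap.range (castLM n)).comap ((dualIn Gq M).subtype.coprod (dualIn Gq N).subtype)

theorem mem_glue {Gq : Matrix (Fin n) (Fin n) ℚ} {M N : Submodule ℤ (Fin n → ℤ)}
    {v : dualIn Gq M} {w : dualIn Gq N} :
    (v, w) ∈ glue Gq M N ↔ (v : Fin n → ℚ) + w ∈ LinearMap.range (castLM n) :=
  Iff.rfl

theorem mem_map_castLM_iff_of_mem_glue {Gq : Matrix (Fin n) (Fin n) ℚ}
    {M N : Submodule ℤ (Fin n → ℤ)} (hM : M.IsPrimitive) (hN : N.IsPrimitive)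
    {v : dualIn Gq M} {w : dualIn Gq N} (h : (v, w) ∈ glue Gq M N) :
    (v : Fin n → ℚ) ∈ M.map (castLM n) ↔ (w : Fin n → ℚ) ∈ N.map (castLM n) :=
  ⟨fun hv => hN.mem_map_castLM_of_add_mem_range (LinearMap.map_le_range hv) w.2.1 h,
    fun hw => hM.mem_map_castLM_of_add_mem_range (LinearMap.map_le_range hw) v.2.1
      (by rwa [add_comm])⟩

end PrimitiveEmbedding

open PrimitiveEmbedding in
theorem discriminant_forms_of_primitive_embedding_general (n : ℕ)
    (G : Matrix (Fin n) (Fin n) ℤ) (hsymm : G.IsSymm)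
    (heven : ∀ x : Fin n → ℤ, ∃ k : ℤ, x ⬝ᵥ G.mulVec x = 2 * k)
    (hunimod : G.det.natAbs = 1)
    (M : Submodule ℤ (Fin n → ℤ))
    (hprim : ∀ (c : ℤ) (x : Fin n → ℤ), c ≠ 0 → c • x ∈ M → x ∈ M)
    (N : Submodule ℤ (Fin n → ℤ))
    (hN : ∀ x : Fin n → ℤ, x ∈ N ↔ ∀ m ∈ M, x ⬝ᵥ G.mulVec m = 0) :
    ∃ φ : discGroup (G.map (Int.cast : ℤ → ℚ)) M ≃+
        discGroup (G.map (Int.cast : ℤ → ℚ)) N,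
      ∀ (v : dualIn (G.map (Int.cast : ℤ → ℚ)) M)
        (w : dualIn (G.map (Int.cast : ℤ → ℚ)) N),
        φ (Submodule.Quotient.mk v) = Submodule.Quotient.mk w →
        ∃ k : ℤ,
          (w : Fin n → ℚ) ⬝ᵥ (G.map (Int.cast : ℤ → ℚ)).mulVec (w : Fin n → ℚ) +
            (v : Fin n → ℚ) ⬝ᵥ (G.map (Int.cast : ℤ → ℚ)).mulVec (v : Fin n → ℚ) =
          2 * (k : ℚ) := by
  have hdet : IsUnit G.det := Int.isUnit_iff_natAbs_eq.2 hunimod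
  have hprimN : N.IsPrimitive := isPrimitive_of_mem_iff hN
  have hVN : qSpan N = (ratForm G).orthogonal (qSpan M) := qSpan_eq_orthogonal hsymm hN
  have hVM : qSpan M = (ratForm G).orthogonal (qSpan N) := by
    rw [hVN, (ratForm G).orthogonal_orthogonal (ratForm_nondegenerate hdet)
      (ratForm_isSymm hsymm).isRefl]
  obtain ⟨e, he⟩ := Submodule.exists_quotientEquiv_of_rel (glue _ M N)
    (A' := (M.map (castLM n)).comap (dualIn _ M).subtype)
    (B' := (N.map (castLM n)).comap (dualIn _ N).subtype)
    (exists_add_mem_range_castLM hsymm hdet hprim hVN)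
    (fun w => (exists_add_mem_range_castLM hsymm hdet hprimN hVM w).imp fun v h => by
      rwa [mem_glue, add_comm])
    (fun v w => mem_map_castLM_iff_of_mem_glue hprim hprimN)
    (fun w hw => by simpa [mem_glue] using LinearMap.map_le_range hw)
  refine ⟨e.toAddEquiv, fun v w hvw => ?_⟩
  have hw : (w : Fin n → ℚ) ∈ qSpan N := w.2.1
  have horth : ratForm G v w = 0 := (hVN ▸ hw) v v.2.1
  simpa only [ratForm_apply] using
    exists_ratForm_add_eq_two_mul hsymm heven horth ((he v w).1 hvw)

/-- Nikulin's Proposition 1.6.1: let `L = ℤⁿ` be an even unimodular lattice with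
symmetric bilinear form `b(x,y) = xᵀ G y` (`b(x,x)` always even, `|det G| = 1`),
let `M ⊆ L` be a primitive nondegenerate sublattice (`L/M` torsion-free), and let
`N = M^⊥ = {x ∈ L : b(x,m) = 0 for all m ∈ M}`. Then there is a group isomorphism
`φ : M∨/M → N∨/N` of discriminant groups with `q_N(φ(ξ)) = -q_M(ξ)` in `ℚ/2ℤ`,
i.e. for representatives `v` of `ξ` and `w` of `φ(ξ)` one has
`b(w,w) + b(v,v) ∈ 2ℤ`. -/
theorem discriminant_forms_of_primitive_embedding (n : ℕ)
    (G : Matrix (Fin n) (Fin n) ℤ) (hsymm : G.IsSymm)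
    (heven : ∀ x : Fin n → ℤ, ∃ k : ℤ, x ⬝ᵥ G.mulVec x = 2 * k)
    (hunimod : G.det.natAbs = 1)
    (M : Submodule ℤ (Fin n → ℤ))
    (hprim : ∀ (c : ℤ) (x : Fin n → ℤ), c ≠ 0 → c • x ∈ M → x ∈ M)
    (hnondeg : ∀ x ∈ M, (∀ y ∈ M, x ⬝ᵥ G.mulVec y = 0) → x = 0)
    (N : Submodule ℤ (Fin n → ℤ))
    (hN : ∀ x : Fin n → ℤ, x ∈ N ↔ ∀ m ∈ M, x ⬝ᵥ G.mulVec m = 0) :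
    ∃ φ : discGroup (G.map (Int.cast : ℤ → ℚ)) M ≃+
        discGroup (G.map (Int.cast : ℤ → ℚ)) N,
      ∀ (v : dualIn (G.map (Int.cast : ℤ → ℚ)) M)
        (w : dualIn (G.map (Int.cast : ℤ → ℚ)) N),
        φ (Submodule.Quotient.mk v) = Submodule.Quotient.mk w →
        ∃ k : ℤ,
          (w : Fin n → ℚ) ⬝ᵥ (G.map (Int.cast : ℤ → ℚ)).mulVec (w : Fin n → ℚ) +
            (v : Fin n → ℚ) ⬝ᵥ (G.map (Int.cast : ℤ → ℚ)).mulVec (v : Fin n → ℚ) =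
          2 * (k : ℚ) :=
  discriminant_forms_of_primitive_embedding_general n G hsymm heven hunimod M hprim N hN
end

section
/- Let Q₁ = [[2a₁, c₁], [c₁, 2b₁]] and Q₂ = [[2a₂, c₂], [c₂, 2b₂]] be reduced positive-definite even integral binary quadratic forms (aᵢ, bᵢ, cᵢ ∈ ℤ, aᵢ, bᵢ > 0, 4aᵢbᵢ − cᵢ² > 0, −aᵢ ≤ cᵢ ≤ aᵢ ≤ bᵢ), and suppose Q₁ = γᵀ Q₂ γ for some γ ∈ SL₂(ℤ). Then either Q₁ = Q₂, or {Q₁, Q₂} = {[[2a, a], [a, 2b]], [[2a, −a], [−a, 2b]]} for some integers a, b, or {Q₁, Q₂} = {[[2a, b], [b, 2a]], [[2a, −b], [−b, 2a]]} for some integers a, b. -/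
/-!
The Gram matrix `!![2a, c; c, 2b]` belongs to `f(x, y) = a x² + c x y + b y²`. If `f` is reduced
then `f(x, y) ≥ a` for `(x, y) ≠ 0` and `f(x, y) ≥ b` for `y ≠ 0`, so `a` and `b` are the first two
successive minima of `f` on `ℤ²`; being `SL₂(ℤ)`-invariant, they agree for `Q₁` and `Q₂`, and
then the discriminant gives `c₁ = ±c₂`. If moreover `|c| < a < b`, the strict form of these bounds
forces `γ = ±1`, hence `c₁ = c₂`; the boundary cases `|c| = a` and `a = b` are the exceptions.
-/

open Matrix

namespace Matrix.SpecialLinearGroup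

variable {n R : Type*} [Fintype n] [DecidableEq n] [CommRing R] {A B : Matrix n n R}

lemma eq_transpose_inv_mul_mul_inv (γ : SpecialLinearGroup n R)
    (h : A = (γ : Matrix n n R)ᵀ * B * γ) :
    B = ((γ⁻¹ : SpecialLinearGroup n R) : Matrix n n R)ᵀ * A * (γ⁻¹ : SpecialLinearGroup n R) := by
  have hγ : (γ : Matrix n n R) * (γ⁻¹ : SpecialLinearGroup n R) = 1 := by
    rw [← coe_mul, mul_inv_cancel, coe_one]
  rw [h, ← Matrix.mul_assoc, ← Matrix.mul_assoc, ← transpose_mul, hγ, Matrix.mul_assoc, hγ,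
    transpose_one, Matrix.one_mul, Matrix.mul_one]

lemma det_eq_of_eq_transpose_mul_mul (γ : SpecialLinearGroup n R)
    (h : A = (γ : Matrix n n R)ᵀ * B * γ) : A.det = B.det := by
  rw [h, det_mul, det_mul, det_transpose, det_coe, one_mul, mul_one]

lemma det_fin_two_eq_one (γ : SpecialLinearGroup (Fin 2) R) :
    γ 0 0 * γ 1 1 - γ 0 1 * γ 1 0 = 1 := by
  simpa [-det_coe, det_fin_two] using γ.det_coe

end Matrix.SpecialLinearGroup

lemma evenGram_coeffs_of_eq_transpose_mul_mul {a₁ b₁ c₁ a₂ b₂ c₂ : ℤ}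
    (M : Matrix (Fin 2) (Fin 2) ℤ)
    (h : !![2 * a₁, c₁; c₁, 2 * b₁] = Mᵀ * !![2 * a₂, c₂; c₂, 2 * b₂] * M) :
    a₁ = a₂ * M 0 0 ^ 2 + c₂ * M 0 0 * M 1 0 + b₂ * M 1 0 ^ 2 ∧
    b₁ = a₂ * M 0 1 ^ 2 + c₂ * M 0 1 * M 1 1 + b₂ * M 1 1 ^ 2 ∧
    c₁ = 2 * a₂ * M 0 0 * M 0 1 + c₂ * (M 0 0 * M 1 1 + M 0 1 * M 1 0) +
      2 * b₂ * M 1 0 * M 1 1 := by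
  have h00 := congrFun (congrFun h 0) 0
  have h01 := congrFun (congrFun h 0) 1
  have h11 := congrFun (congrFun h 1) 1
  simp only [mul_apply, Fin.sum_univ_two, transpose_apply, of_apply, cons_val', cons_val_zero,
    cons_val_one, empty_val', cons_val_fin_one] at h00 h01 h11
  exact ⟨by linarith, by linarith, by linear_combination h01⟩

namespace ReducedForm

section Values

variable {a b c x y : ℤ} (hc : |c| ≤ a) (hab : a ≤ b)
include hc hab

lemma add_sub_abs_le_eval (hx : x ≠ 0) (hy : y ≠ 0) :
    a + b - |c| ≤ a * x ^ 2 + c * x * y + b * y ^ 2 := by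
  have hx1 : 1 ≤ |x| ^ 2 := one_le_pow₀ (Int.one_le_abs hx)
  have hy1 : 1 ≤ |y| ^ 2 := one_le_pow₀ (Int.one_le_abs hy)
  have hcxy : -(c * x * y) ≤ |c| * (|x| * |y|) := by
    rw [← abs_mul, ← abs_mul, ← mul_assoc]
    exact neg_le_abs _
  have hxy : 2 * (|x| * |y|) ≤ |x| ^ 2 + |y| ^ 2 := by nlinarith [sq_nonneg (|x| - |y|)]
  rw [← sq_abs x, ← sq_abs y]
  nlinarith [mul_le_mul_of_nonneg_left hxy (abs_nonneg c),
    mul_le_mul_of_nonneg_left (sub_nonneg.2 hx1) (by linarith [abs_nonneg c] : 0 ≤ 2 * a - |c|),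
    mul_le_mul_of_nonneg_left (sub_nonneg.2 hy1) (by linarith [abs_nonneg c] : 0 ≤ 2 * b - |c|)]

lemma b_le_eval (hy : y ≠ 0) : b ≤ a * x ^ 2 + c * x * y + b * y ^ 2 := by
  rcases eq_or_ne x 0 with rfl | hx
  · have hy1 : 1 ≤ y ^ 2 := one_le_sq_iff_one_le_abs _ |>.2 (Int.one_le_abs hy)
    nlinarith [abs_nonneg c]
  · linarith [add_sub_abs_le_eval hc hab hx hy]

lemma a_le_eval (hxy : x ≠ 0 ∨ y ≠ 0) : a ≤ a * x ^ 2 + c * x * y + b * y ^ 2 := by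
  rcases eq_or_ne y 0 with rfl | hy
  · have hx1 : 1 ≤ x ^ 2 :=
      one_le_sq_iff_one_le_abs _ |>.2 (Int.one_le_abs (hxy.resolve_right (by simp)))
    nlinarith [abs_nonneg c]
  · linarith [b_le_eval (x := x) hc hab hy]

end Values

section Conj

variable {a₁ b₁ c₁ a₂ b₂ c₂ : ℤ} (γ : SpecialLinearGroup (Fin 2) ℤ)
  (h : !![2 * a₁, c₁; c₁, 2 * b₁] =
    (γ : Matrix (Fin 2) (Fin 2) ℤ)ᵀ * !![2 * a₂, c₂; c₂, 2 * b₂] * γ)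
include h

lemma a_le_of_conj (hc₂ : |c₂| ≤ a₂) (hab₂ : a₂ ≤ b₂) : a₂ ≤ a₁ := by
  obtain ⟨ha₁, -, -⟩ := evenGram_coeffs_of_eq_transpose_mul_mul _ h
  have hdet := γ.det_fin_two_eq_one
  have hcol : γ 0 0 ≠ 0 ∨ γ 1 0 ≠ 0 := by
    by_contra! hcol
    simp [hcol.1, hcol.2] at hdet
  exact ha₁ ▸ a_le_eval hc₂ hab₂ hcol

lemma b_le_of_conj (hc₂ : |c₂| ≤ a₂) (hab₂ : a₂ ≤ b₂) (hab₁ : a₁ ≤ b₁) : b₂ ≤ b₁ := by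
  obtain ⟨ha₁, hb₁, -⟩ := evenGram_coeffs_of_eq_transpose_mul_mul _ h
  have hdet := γ.det_fin_two_eq_one
  rcases ne_or_eq (γ 1 1) 0 with hs | hs
  · exact hb₁ ▸ b_le_eval hc₂ hab₂ hs
  · have hr : γ 1 0 ≠ 0 := by
      rintro hr
      simp [hs, hr] at hdet
    linarith [ha₁ ▸ b_le_eval (x := γ 0 0) hc₂ hab₂ hr]

lemma c_eq_of_conj_of_strict (hc₂ : |c₂| < a₂) (hab₂ : a₂ < b₂) (ha : a₁ ≤ a₂)
    (hb : b₁ ≤ b₂) : c₁ = c₂ := by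
  obtain ⟨ha₁, hb₁, hc₁⟩ := evenGram_coeffs_of_eq_transpose_mul_mul _ h
  have hdet := γ.det_fin_two_eq_one
  have hr : γ 1 0 = 0 := by
    by_contra hr
    linarith [ha₁ ▸ b_le_eval (x := γ 0 0) hc₂.le hab₂.le hr]
  have hs : γ 1 1 ≠ 0 := by
    rintro hs
    simp [hs, hr] at hdet
  have hq : γ 0 1 = 0 := by
    by_contra hq
    linarith [hb₁ ▸ add_sub_abs_le_eval hc₂.le hab₂.le hq hs]
  rw [hr, hq] at hdet hc₁
  linear_combination hc₁ + c₂ * hdet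

end Conj

end ReducedForm

theorem reduced_forms_equivalence_general (a₁ b₁ c₁ a₂ b₂ c₂ : ℤ)
    (hred₁ : -a₁ ≤ c₁ ∧ c₁ ≤ a₁ ∧ a₁ ≤ b₁)
    (hred₂ : -a₂ ≤ c₂ ∧ c₂ ≤ a₂ ∧ a₂ ≤ b₂)
    (γ : Matrix.SpecialLinearGroup (Fin 2) ℤ)
    (hequiv : !![2 * a₁, c₁; c₁, 2 * b₁] =
      (γ : Matrix (Fin 2) (Fin 2) ℤ)ᵀ * !![2 * a₂, c₂; c₂, 2 * b₂] * γ) :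
    !![2 * a₁, c₁; c₁, 2 * b₁] = !![2 * a₂, c₂; c₂, 2 * b₂] ∨
    (∃ a b : ℤ,
      (!![2 * a₁, c₁; c₁, 2 * b₁] = !![2 * a, a; a, 2 * b] ∧
        !![2 * a₂, c₂; c₂, 2 * b₂] = !![2 * a, -a; -a, 2 * b]) ∨
      (!![2 * a₁, c₁; c₁, 2 * b₁] = !![2 * a, -a; -a, 2 * b] ∧
        !![2 * a₂, c₂; c₂, 2 * b₂] = !![2 * a, a; a, 2 * b])) ∨
    (∃ a b : ℤ,
      (!![2 * a₁, c₁; c₁, 2 * b₁] = !![2 * a, b; b, 2 * a] ∧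
        !![2 * a₂, c₂; c₂, 2 * b₂] = !![2 * a, -b; -b, 2 * a]) ∨
      (!![2 * a₁, c₁; c₁, 2 * b₁] = !![2 * a, -b; -b, 2 * a] ∧
        !![2 * a₂, c₂; c₂, 2 * b₂] = !![2 * a, b; b, 2 * a])) := by
  obtain ⟨hc₁l, hc₁r, hab₁⟩ := hred₁
  obtain ⟨hc₂l, hc₂r, hab₂⟩ := hred₂
  have hc₁ : |c₁| ≤ a₁ := abs_le.2 ⟨hc₁l, hc₁r⟩
  have hc₂ : |c₂| ≤ a₂ := abs_le.2 ⟨hc₂l, hc₂r⟩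
  have hequiv' := γ.eq_transpose_inv_mul_mul_inv hequiv
  obtain rfl : a₁ = a₂ :=
    le_antisymm (ReducedForm.a_le_of_conj _ hequiv' hc₁ hab₁)
      (ReducedForm.a_le_of_conj γ hequiv hc₂ hab₂)
  obtain rfl : b₁ = b₂ :=
    le_antisymm (ReducedForm.b_le_of_conj _ hequiv' hc₁ hab₁ hab₂)
      (ReducedForm.b_le_of_conj γ hequiv hc₂ hab₂ hab₁)
  have hdisc : c₁ ^ 2 = c₂ ^ 2 := by
    have hdet := γ.det_eq_of_eq_transpose_mul_mul hequiv
    rw [det_fin_two_of, det_fin_two_of] at hdet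
    linarith
  obtain rfl | rfl := sq_eq_sq_iff_eq_or_eq_neg.1 hdisc
  · exact Or.inl rfl
  rcases hc₂.eq_or_lt with hc | hc
  · obtain rfl | rfl := (abs_eq ((abs_nonneg c₂).trans hc₂)).1 hc
    · exact Or.inr (Or.inl ⟨c₂, b₁, Or.inr ⟨rfl, rfl⟩⟩)
    · exact Or.inr (Or.inl ⟨a₁, b₁, Or.inl ⟨by rw [neg_neg], rfl⟩⟩)
  rcases hab₁.eq_or_lt with rfl | hab
  · exact Or.inr (Or.inr ⟨a₁, c₂, Or.inr ⟨rfl, rfl⟩⟩)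
  rw [ReducedForm.c_eq_of_conj_of_strict γ hequiv hc hab le_rfl le_rfl]
  exact Or.inl rfl

/-- Distinct reduced positive-definite even integral binary quadratic forms are
`SL₂(ℤ)`-inequivalent, with the two well-known exceptions: if
`Q₁ = [[2a₁,c₁],[c₁,2b₁]]` and `Q₂ = [[2a₂,c₂],[c₂,2b₂]]` are reduced
positive-definite even forms and `Q₁ = γᵀ Q₂ γ` for some `γ ∈ SL₂(ℤ)`, then either
`Q₁ = Q₂`, or `{Q₁, Q₂} = {[[2a,a],[a,2b]], [[2a,-a],[-a,2b]]}` for some `a, b`,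
or `{Q₁, Q₂} = {[[2a,b],[b,2a]], [[2a,-b],[-b,2a]]}` for some `a, b`. -/
theorem reduced_forms_equivalence (a₁ b₁ c₁ a₂ b₂ c₂ : ℤ)
    (ha₁ : 0 < a₁) (hb₁ : 0 < b₁) (hd₁ : 0 < 4 * a₁ * b₁ - c₁ ^ 2)
    (hred₁ : -a₁ ≤ c₁ ∧ c₁ ≤ a₁ ∧ a₁ ≤ b₁)
    (ha₂ : 0 < a₂) (hb₂ : 0 < b₂) (hd₂ : 0 < 4 * a₂ * b₂ - c₂ ^ 2)
    (hred₂ : -a₂ ≤ c₂ ∧ c₂ ≤ a₂ ∧ a₂ ≤ b₂)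
    (γ : Matrix.SpecialLinearGroup (Fin 2) ℤ)
    (hequiv : !![2 * a₁, c₁; c₁, 2 * b₁] =
      (γ : Matrix (Fin 2) (Fin 2) ℤ)ᵀ * !![2 * a₂, c₂; c₂, 2 * b₂] * γ) :
    !![2 * a₁, c₁; c₁, 2 * b₁] = !![2 * a₂, c₂; c₂, 2 * b₂] ∨
    (∃ a b : ℤ,
      (!![2 * a₁, c₁; c₁, 2 * b₁] = !![2 * a, a; a, 2 * b] ∧
        !![2 * a₂, c₂; c₂, 2 * b₂] = !![2 * a, -a; -a, 2 * b]) ∨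
      (!![2 * a₁, c₁; c₁, 2 * b₁] = !![2 * a, -a; -a, 2 * b] ∧
        !![2 * a₂, c₂; c₂, 2 * b₂] = !![2 * a, a; a, 2 * b])) ∨
    (∃ a b : ℤ,
      (!![2 * a₁, c₁; c₁, 2 * b₁] = !![2 * a, b; b, 2 * a] ∧
        !![2 * a₂, c₂; c₂, 2 * b₂] = !![2 * a, -b; -b, 2 * a]) ∨
      (!![2 * a₁, c₁; c₁, 2 * b₁] = !![2 * a, -b; -b, 2 * a] ∧
        !![2 * a₂, c₂; c₂, 2 * b₂] = !![2 * a, b; b, 2 * a])) :=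
  reduced_forms_equivalence_general a₁ b₁ c₁ a₂ b₂ c₂ hred₁ hred₂ γ hequiv
end
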